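/- arXiv:2312.08114 — 3 statements merged into one kernel-verified Lean document; each statement's English description precedes it below -/
import Mathlib

section
/- For any root of unity ξ with ξ ≠ 1 and ξ ≠ -1, and any positive integer ℓ, the real part of the integral ∫₀^∞ Log(1 + (ξ-1)·e^{-ℓx}) dx is strictly negative, where Log denotes the principal branch of the complex logarithm. -/
open Complex Real Filter Topology MeasureTheory Set Asymptotics

/-!
Write `t = e^{-ℓx} ∈ (0, 1)`. Then `1 + (ξ - 1)t = (1 - t)·1 + t·ξ` is a proper convex combination
of two distinct points of the unit circle, so by strict convexity of the disc it has modulus `< 1`,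
and the real part `log ‖1 + (ξ - 1)t‖` of the integrand is negative. Since `ξ` is not real, the
integrand stays off the branch cut, hence is continuous, and it is `O(e^{-ℓx})` at infinity, hence
integrable.
-/

lemma Complex.isBigO_log_one_add : (fun z : ℂ ↦ log (1 + z)) =O[𝓝 0] id :=
  IsBigO.of_bound (3 / 2) <| by
    filter_upwards [Metric.closedBall_mem_nhds (0 : ℂ) one_half_pos] with z hz
    exact norm_log_one_add_half_le_self (by simpa using hz)

lemma integrableOn_Ioi_log_one_add {w : ℝ → ℂ} {a b : ℝ} (hb : 0 < b)
    (hw : ContinuousOn w (Ici a)) (hslit : ∀ x ∈ Ici a, 1 + w x ∈ slitPlane)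
    (hwO : w =O[atTop] fun x ↦ Real.exp (-b * x)) :
    IntegrableOn (fun x ↦ log (1 + w x)) (Ioi a) := by
  have hw0 : Tendsto w atTop (𝓝 0) :=
    hwO.trans_tendsto <| tendsto_exp_atBot.comp <|
      tendsto_id.const_mul_atTop_of_neg (neg_neg_iff_pos.2 hb)
  have hcont : ContinuousOn (fun x ↦ log (1 + w x)) (Ici a) :=
    (continuousOn_const.add hw).clog hslit
  refine (integrableOn_Ici_iff_integrableOn_Ioi (by finiteness)).mp <|
    (hcont.locallyIntegrableOn measurableSet_Ici).integrableOn_of_isBigO_atTop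
      ((isBigO_log_one_add.comp_tendsto hw0).trans hwO)
      ⟨Ioi b, Ioi_mem_atTop b, exp_neg_integrableOn_Ioi b hb⟩

lemma setIntegral_neg_of_forall_neg {X : Type*} [MeasurableSpace X] {μ : Measure X} {s : Set X}
    {f : X → ℝ} (hs : MeasurableSet s) (hμs : μ s ≠ 0) (hf : IntegrableOn f s μ)
    (hneg : ∀ x ∈ s, f x < 0) : ∫ x in s, f x ∂μ < 0 := by
  have hpos : 0 < ∫ x in s, -f x ∂μ := by
    rw [setIntegral_pos_iff_support_of_nonneg_ae (f := fun x ↦ -f x) _ hf.neg]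
    · rw [inter_eq_self_of_subset_right fun x hx ↦
        Function.mem_support.2 (neg_ne_zero.2 (hneg x hx).ne)]
      exact pos_iff_ne_zero.2 hμs
    · filter_upwards [ae_restrict_mem hs] with x hx using neg_nonneg.2 (hneg x hx).le
  rwa [integral_neg, neg_pos] at hpos

lemma Complex.im_ne_zero_of_norm_eq_one {ξ : ℂ} (hξ : ‖ξ‖ = 1) (hξ1 : ξ ≠ 1) (hξneg1 : ξ ≠ -1) :
    ξ.im ≠ 0 := by
  intro him
  have hre : ξ = ξ.re := Complex.ext rfl (by simp [him])
  rw [hre, norm_real, Real.norm_eq_abs] at hξ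
  rcases (abs_eq zero_le_one).1 hξ with h | h
  · exact hξ1 (by rw [hre, h]; simp)
  · exact hξneg1 (by rw [hre, h]; simp)

lemma Complex.norm_one_add_sub_one_mul_lt_one {ξ : ℂ} (hξ : ‖ξ‖ = 1) (hξ1 : ξ ≠ 1) {t : ℝ}
    (ht0 : 0 < t) (ht1 : t < 1) : ‖1 + (ξ - 1) * t‖ < 1 := by
  have hcombo : 1 + (ξ - 1) * t = (1 - t) • (1 : ℂ) + t • ξ := by
    simp only [real_smul]; push_cast; ring
  rw [hcombo]
  exact norm_combo_lt_of_ne (by simp) hξ.le hξ1.symm (by linarith) ht0 (by ring)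

lemma Complex.one_add_sub_one_mul_mem_slitPlane {ξ : ℂ} (hξ : ξ.im ≠ 0) {t : ℝ} (ht : t ≠ 0) :
    1 + (ξ - 1) * t ∈ slitPlane :=
  mem_slitPlane_iff.2 <| Or.inr <| by simpa using mul_ne_zero hξ ht

lemma Complex.re_log_neg {z : ℂ} (h0 : z ≠ 0) (h1 : ‖z‖ < 1) : (log z).re < 0 := by
  simpa only [log_re] using Real.log_neg (norm_pos_iff.2 h0) h1

/-- For any root of unity `ξ ∉ {1, -1}` and positive integer `ℓ`, the real part of
`∫₀^∞ Log(1 + (ξ-1)e^{-ℓx}) dx` is strictly negative. -/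
theorem re_integral_log_neg (ξ : ℂ) (k : ℕ) (hk : 1 ≤ k) (hξk : ξ ^ k = 1)
    (hξ1 : ξ ≠ 1) (hξneg1 : ξ ≠ -1) (ℓ : ℕ) (hℓ : 1 ≤ ℓ) :
    (∫ x in Set.Ioi (0 : ℝ),
      Complex.log (1 + (ξ - 1) * Complex.exp (-(ℓ : ℂ) * (x : ℂ)))).re < 0 := by
  have hξ : ‖ξ‖ = 1 := norm_eq_one_of_pow_eq_one hξk (by omega)
  have hξim : ξ.im ≠ 0 := im_ne_zero_of_norm_eq_one hξ hξ1 hξneg1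
  have hℓ0 : (0 : ℝ) < ℓ := by exact_mod_cast hℓ
  have hexp (x : ℝ) : Complex.exp (-(ℓ : ℂ) * x) = ↑(Real.exp (-ℓ * x)) := by push_cast; ring_nf
  simp_rw [hexp]
  have hslit (x : ℝ) : 1 + (ξ - 1) * ↑(Real.exp (-ℓ * x)) ∈ slitPlane :=
    one_add_sub_one_mul_mem_slitPlane hξim (Real.exp_pos _).ne'
  have hint : IntegrableOn (fun x : ℝ ↦ log (1 + (ξ - 1) * ↑(Real.exp (-ℓ * x)))) (Ioi 0) :=
    integrableOn_Ioi_log_one_add hℓ0 (by fun_prop) (fun x _ ↦ hslit x)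
      ((isBigO_ofReal_left.2 (isBigO_refl _ _)).const_mul_left _)
  rw [← RCLike.re_to_complex, ← integral_re hint]
  refine setIntegral_neg_of_forall_neg measurableSet_Ioi (by simp) hint.re fun x hx ↦ ?_
  have ht1 : Real.exp (-ℓ * x) < 1 := Real.exp_lt_one_iff.2 (by nlinarith [mem_Ioi.1 hx])
  exact re_log_neg (slitPlane_ne_zero (hslit x))
    (norm_one_add_sub_one_mul_lt_one hξ hξ1 (Real.exp_pos _) ht1)
end

section
/- The integral ∫₀^∞ log|1 - 2e^{-ℓx}| dx is strictly negative for every positive integer ℓ. -/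
open Real Filter Topology MeasureTheory Set

lemma aux_abs_lower (t : ℝ) : |t| * Real.exp (-|t|) ≤ |1 - Real.exp (-t)| := by
  rcases le_or_gt 0 t with ht | ht
  · rw [abs_of_nonneg ht, abs_of_nonneg (by simpa using Real.exp_le_one_iff.mpr (neg_nonpos.mpr ht))]
    have h1 : t + 1 ≤ Real.exp t := Real.add_one_le_exp t
    have h2 : Real.exp (-t) * Real.exp t = 1 := by rw [← Real.exp_add]; simp
    nlinarith [Real.exp_pos (-t)]
  · have h1 : -t + 1 ≤ Real.exp (-t) := Real.add_one_le_exp (-t)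
    rw [abs_of_neg ht, abs_of_neg (by nlinarith)]
    have h2 : Real.exp (-(-t)) ≤ 1 := Real.exp_le_one_iff.mpr (by linarith)
    nlinarith [Real.exp_pos (-(-t))]

lemma aux_rpow_zero {x : ℝ} (hx : x ≤ 0) : x ^ (-(1/2) : ℝ) = 0 := by
  rcases eq_or_lt_of_le hx with h | h
  · subst h; exact Real.zero_rpow (show (-(1/2) : ℝ) ≠ 0 by norm_num)
  · rw [Real.rpow_def_of_neg h]
    have hc : Real.cos ((-(1/2) : ℝ) * π) = 0 := by
      rw [show ((-(1/2) : ℝ) * π) = -(π/2) by ring, Real.cos_neg, Real.cos_pi_div_two]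
    rw [hc, mul_zero]

lemma aux_abs_rpow (t : ℝ) : |t| ^ (-(1/2) : ℝ) = t ^ (-(1/2) : ℝ) + (-t) ^ (-(1/2) : ℝ) := by
  rcases lt_trichotomy t 0 with h | h | h
  · rw [abs_of_neg h, aux_rpow_zero h.le, zero_add]
  · rw [h]; simp [Real.zero_rpow (show (-(1/2) : ℝ) ≠ 0 by norm_num)]
  · rw [abs_of_pos h, aux_rpow_zero (by linarith : -t ≤ 0), add_zero]

lemma aux_neg_log_le (y : ℝ) (hy : 0 < y) : -Real.log y ≤ 2 * y ^ (-(1/2) : ℝ) := by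
  have hz : (0:ℝ) < y ^ (-(1/2) : ℝ) := Real.rpow_pos_of_pos hy _
  have h1 : Real.log (y ^ (-(1/2) : ℝ)) = (-(1/2)) * Real.log y := Real.log_rpow hy _
  have h2 : Real.log (y ^ (-(1/2) : ℝ)) ≤ y ^ (-(1/2) : ℝ) - 1 := Real.log_le_sub_one_of_pos hz
  nlinarith

lemma aux_main (L : ℝ) (hL1 : 1 ≤ L) :
    (∫ x in Set.Ioi (0 : ℝ), Real.log |1 - 2 * Real.exp (-L * x)|) < 0 := by
  have hL0 : 0 < L := by linarith
  set x₀ : ℝ := Real.log 2 / L with hx₀def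
  have hx₀ : 0 < x₀ := div_pos (Real.log_pos one_lt_two) hL0
  set T : ℝ := x₀ + 1 with hTdef
  have hT : 0 < T := by positivity
  set f : ℝ → ℝ := fun x => Real.log |1 - 2 * Real.exp (-L * x)| with hfdef
  have hexp : ∀ x : ℝ, 2 * Real.exp (-L * x) = Real.exp (-(L * (x - x₀))) := by
    intro x
    have hLx₀ : L * x₀ = Real.log 2 := by
      rw [hx₀def]; field_simp
    rw [show -(L * (x - x₀)) = -L * x + L * x₀ by ring, Real.exp_add, hLx₀,
      Real.exp_log two_pos]
    ring
  -- lower bound near the singularity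
  set c : ℝ := L * Real.exp (-(L * T)) with hcdef
  have hc0 : 0 < c := by positivity
  have hlow : ∀ x : ℝ, |x - x₀| ≤ T → c * |x - x₀| ≤ |1 - 2 * Real.exp (-L * x)| := by
    intro x hx
    rw [hexp x]
    have h1 := aux_abs_lower (L * (x - x₀))
    have habs : |L * (x - x₀)| = L * |x - x₀| := by rw [abs_mul, abs_of_pos hL0]
    have h2 : Real.exp (-(L * T)) ≤ Real.exp (-|L * (x - x₀)|) := by
      apply Real.exp_le_exp.mpr; rw [habs]; nlinarith
    calc c * |x - x₀| = (L * |x - x₀|) * Real.exp (-(L * T)) := by rw [hcdef]; ring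
      _ ≤ (L * |x - x₀|) * Real.exp (-|L * (x - x₀)|) :=
          mul_le_mul_of_nonneg_left h2 (by positivity)
      _ = |L * (x - x₀)| * Real.exp (-|L * (x - x₀)|) := by rw [habs]
      _ ≤ _ := h1
  -- upper bound 1
  have hub : ∀ x : ℝ, 0 ≤ x → |1 - 2 * Real.exp (-L * x)| ≤ 1 := by
    intro x hx
    have h1 : Real.exp (-L * x) ≤ 1 := Real.exp_le_one_iff.mpr (by nlinarith)
    have h2 : 0 < Real.exp (-L * x) := Real.exp_pos _
    rw [abs_le]; constructor <;> nlinarith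
  have hfnp : ∀ x : ℝ, 0 ≤ x → f x ≤ 0 := fun x hx =>
    Real.log_nonpos (abs_nonneg _) (hub x hx)
  have hmeas : Measurable f := by
    apply Real.measurable_log.comp
    exact (measurable_const.sub ((Real.measurable_exp.comp
      ((measurable_const (a := -L)).mul measurable_id)).const_mul 2)).abs
  -- integrability on Ioc 0 T
  have hint1 : IntegrableOn f (Set.Ioc 0 T) := by
    set C : ℝ := 2 * c ^ (-(1/2) : ℝ) with hCdef
    have hC0 : 0 ≤ C := by positivity
    set g : ℝ → ℝ := fun x => C * ((x - x₀) ^ (-(1/2) : ℝ) + (x₀ - x) ^ (-(1/2) : ℝ)) with hgdef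
    have hg : IntegrableOn g (Set.Ioc 0 T) := by
      have h1 : IntervalIntegrable (fun x : ℝ => (x - x₀) ^ (-(1/2) : ℝ)) volume 0 T := by
        have := (intervalIntegral.intervalIntegrable_rpow' (a := 0 - x₀) (b := T - x₀)
          (by norm_num : (-1:ℝ) < -(1/2))).comp_sub_right x₀
        simpa using this
      have h2 : IntervalIntegrable (fun x : ℝ => (x₀ - x) ^ (-(1/2) : ℝ)) volume 0 T := by
        have := (intervalIntegral.intervalIntegrable_rpow' (a := x₀ - 0) (b := x₀ - T)
          (by norm_num : (-1:ℝ) < -(1/2))).comp_sub_left x₀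
        simpa using this
      have h3 : IntervalIntegrable g volume 0 T := by
        rw [hgdef]; exact ((h1.add h2).const_mul C)
      rw [← intervalIntegrable_iff_integrableOn_Ioc_of_le hT.le]
      exact h3
    apply MeasureTheory.Integrable.mono hg hmeas.aestronglyMeasurable.restrict
    filter_upwards [ae_restrict_mem measurableSet_Ioc] with x hx
    by_cases hxx : x = x₀
    · subst hxx
      have h01 : 2 * Real.exp (-L * x₀) = 1 := by rw [hexp]; simp
      have hf0 : f x₀ = 0 := by
        show Real.log |1 - 2 * Real.exp (-L * x₀)| = 0
        rw [h01]; simp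
      rw [hf0]; simp only [norm_zero]; exact norm_nonneg _
    · have habs0 : 0 < |x - x₀| := abs_pos.mpr (sub_ne_zero.mpr hxx)
      have hxd : |x - x₀| ≤ T := by
        rw [abs_le]
        constructor <;> nlinarith [hx.1, hx.2, hx₀, hTdef.le, hTdef.ge]
      have hlb := hlow x hxd
      have hy0 : 0 < |1 - 2 * Real.exp (-L * x)| := lt_of_lt_of_le (by positivity) hlb
      have hfx : f x ≤ 0 := hfnp x hx.1.le
      have m1 : Real.log (c * |x - x₀|) ≤ f x := Real.log_le_log (by positivity) hlb
      have m2 : -Real.log (c * |x - x₀|) ≤ 2 * (c * |x - x₀|) ^ (-(1/2) : ℝ) :=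
        aux_neg_log_le _ (by positivity)
      have m3 : (c * |x - x₀|) ^ (-(1/2) : ℝ) = c ^ (-(1/2) : ℝ) * |x - x₀| ^ (-(1/2) : ℝ) :=
        Real.mul_rpow hc0.le (abs_nonneg _)
      have m4 : |x - x₀| ^ (-(1/2) : ℝ) = (x - x₀) ^ (-(1/2) : ℝ) + (-(x - x₀)) ^ (-(1/2) : ℝ) :=
        aux_abs_rpow _
      have hgx : g x = 2 * (c * |x - x₀|) ^ (-(1/2) : ℝ) := by
        rw [hgdef]; simp only []
        rw [m3, m4, hCdef, show x₀ - x = -(x - x₀) by ring]; ring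
      have hfg : -f x ≤ g x := by rw [hgx]; linarith
      have hg0 : 0 ≤ g x := le_trans (by linarith) hfg
      rw [Real.norm_eq_abs, Real.norm_eq_abs, abs_of_nonpos hfx, abs_of_nonneg hg0]
      exact hfg
  -- integrability on Ioi T
  have hint2 : IntegrableOn f (Set.Ioi T) := by
    have hg : IntegrableOn (fun x => 4 * Real.exp (-L * x)) (Set.Ioi T) :=
      (exp_neg_integrableOn_Ioi T hL0).const_mul 4
    apply MeasureTheory.Integrable.mono hg hmeas.aestronglyMeasurable.restrict
    filter_upwards [ae_restrict_mem measurableSet_Ioi] with x hx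
    have hxT : T < x := hx
    set u : ℝ := 2 * Real.exp (-L * x) with hudef
    have hu0 : 0 < u := by positivity
    have hu2 : u ≤ 1/2 := by
      have h1 : u = Real.exp (-(L * (x - x₀))) := hexp x
      have h2 : Real.exp (-(L * (x - x₀))) ≤ Real.exp (-1 : ℝ) := by
        apply Real.exp_le_exp.mpr; nlinarith
      have h3 : Real.exp (-1 : ℝ) ≤ 1/2 := by
        have h4 : (2:ℝ) ≤ Real.exp 1 := by nlinarith [Real.add_one_le_exp (1:ℝ)]
        have h5 : Real.exp (-1 : ℝ) * Real.exp 1 = 1 := by rw [← Real.exp_add]; simp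
        nlinarith [Real.exp_pos (-1 : ℝ)]
      linarith [h1 ▸ h2]
    have hv0 : (0:ℝ) < 1 - u := by linarith
    have hfx : f x = Real.log (1 - u) := by rw [hfdef]; simp only []; rw [abs_of_pos hv0]
    have hfxn : f x ≤ 0 := hfnp x (by linarith)
    have hbound : -Real.log (1 - u) ≤ 2 * u := by
      have hi := Real.log_le_sub_one_of_pos (show (0:ℝ) < (1 - u)⁻¹ by positivity)
      have hinv : Real.log (1 - u)⁻¹ = -Real.log (1 - u) := Real.log_inv _
      have hmul : (1 - u) * (1 - u)⁻¹ = 1 := mul_inv_cancel₀ (ne_of_gt hv0)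
      nlinarith
    have hg0 : (0:ℝ) ≤ 4 * Real.exp (-L * x) := by positivity
    rw [Real.norm_eq_abs, Real.norm_eq_abs, abs_of_nonpos hfxn, abs_of_nonneg hg0, hfx]
    rw [hudef] at hbound; linarith
  have hunion : Set.Ioc 0 T ∪ Set.Ioi T = Set.Ioi (0:ℝ) := Set.Ioc_union_Ioi_eq_Ioi hT.le
  have hint : IntegrableOn f (Set.Ioi 0) := by rw [← hunion]; exact hint1.union hint2
  -- strict negativity
  have h1 : 0 ≤ᵐ[volume.restrict (Set.Ioi 0)] fun x => -f x := by
    filter_upwards [ae_restrict_mem measurableSet_Ioi] with x hx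
    simpa using hfnp x (le_of_lt hx)
  have h2 : Integrable (fun x => -f x) (volume.restrict (Set.Ioi 0)) := hint.neg
  have hsupp : Set.Ioi 0 \ {x₀} ⊆ Function.support fun x => -f x := by
    rintro x ⟨hx1, hx2⟩
    have hxp : (0:ℝ) < x := hx1
    have hE1 : Real.exp (-L * x) < 1 := Real.exp_lt_one_iff.mpr (by nlinarith)
    have hE0 : 0 < Real.exp (-L * x) := Real.exp_pos _
    have hne : 1 - 2 * Real.exp (-L * x) ≠ 0 := by
      intro h
      have he1 : Real.exp (-(L * (x - x₀))) = 1 := by rw [← hexp]; linarith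
      have he2 : -(L * (x - x₀)) = 0 :=
        Real.exp_injective (by rw [Real.exp_zero]; exact he1)
      have h0 : L * (x - x₀) = 0 := by linarith
      rcases mul_eq_zero.mp h0 with h' | h'
      · exact absurd h' (ne_of_gt hL0)
      · exact hx2 (Set.mem_singleton_iff.mpr (sub_eq_zero.mp h'))
    have hy0 : 0 < |1 - 2 * Real.exp (-L * x)| := abs_pos.mpr hne
    have hy1 : |1 - 2 * Real.exp (-L * x)| < 1 := by
      rw [abs_lt]; constructor <;> nlinarith
    have : f x < 0 := Real.log_neg hy0 hy1
    simp only [Function.mem_support]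
    intro h; rw [neg_eq_zero] at h; linarith [h ▸ this]
  have hμ : 0 < (volume.restrict (Set.Ioi 0)) (Function.support fun x => -f x) := by
    refine lt_of_lt_of_le ?_ (measure_mono hsupp)
    rw [Measure.restrict_apply (measurableSet_Ioi.diff (measurableSet_singleton _))]
    have hss : (Set.Ioi 0 \ {x₀}) ∩ Set.Ioi 0 = Set.Ioi 0 \ {x₀} := by
      apply Set.inter_eq_self_of_subset_left; exact Set.diff_subset
    rw [hss, measure_diff_null (measure_singleton _), Real.volume_Ioi]
    exact ENNReal.zero_lt_top
  have hpos := (integral_pos_iff_support_of_nonneg_ae h1 h2).mpr hμ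
  rw [integral_neg] at hpos
  linarith

/-- `∫₀^∞ log|1 - 2e^{-ℓx}| dx < 0` for every positive integer `ℓ`. -/
theorem integral_log_abs_neg (ℓ : ℕ) (hℓ : 1 ≤ ℓ) :
    (∫ x in Set.Ioi (0 : ℝ), Real.log |1 - 2 * Real.exp (-(ℓ : ℝ) * x)|) < 0 :=
  aux_main (ℓ : ℝ) (by exact_mod_cast hℓ)
end

section
/- Let M > 0 be fixed, τ = u + iv in the upper half-plane with Mv ≤ |u| ≤ 1/2 and v → 0⁺, and q = e^{2πiτ}. Then |∏_{n≥1}(1-qⁿ)^{-1}| ≪ √v · exp( (1/v)·( π/12 − (1/2π)·(1 − 1/√(1+M²)) ) ). -/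
open Complex Real

/-!
`log ‖P(q)‖ = Re ∑_{k ≥ 1} qᵏ / (k (1 - qᵏ))`. With `t = 2πv`, so `‖q‖ = e^{-t}`, each term is
bounded by `1 / (k (e^{kt} - 1))`, and these sum to at most `π² / (6t) + (log t) / 2 + O(1)`:
for `kt ≤ 1` use `1 / (e^s - 1) ≤ 1/s - 1/2 + s/6`, which produces the Basel sum and a harmonic
sum, and for `kt > 1` a geometric tail. The saving comes from the term `k = 1` alone: it is at most
`1 / ‖1 - q‖ ≤ 1 / ‖2πτ‖ + O(1) ≤ 1 / (t √(1 + M²)) + O(1)` because `|u| ≥ Mv`, instead of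
`1 / (e^t - 1) ≈ 1 / t`.
-/

namespace Real

theorem inv_exp_sub_one_le {s : ℝ} (hs : 0 < s) :
    (exp s - 1)⁻¹ ≤ s⁻¹ - 1 / 2 + s / 6 := by
  have hcubic : s * (1 + s / 2 + s ^ 2 / 6) ≤ exp s - 1 := by
    have := sum_le_exp_of_nonneg hs.le 4
    rw [show ∑ i ∈ Finset.range 4, s ^ i / i.factorial = 1 + s + s ^ 2 / 2 + s ^ 3 / 6 by
      norm_num [Finset.sum_range_succ, Nat.factorial]] at this
    linarith
  calc (exp s - 1)⁻¹ ≤ (s * (1 + s / 2 + s ^ 2 / 6))⁻¹ := inv_anti₀ (by positivity) hcubic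
    _ ≤ s⁻¹ - 1 / 2 + s / 6 := by
      rw [show s⁻¹ - 1 / 2 + s / 6 = (1 - s / 2 + s ^ 2 / 6) / s by field_simp,
        inv_le_iff_one_le_mul₀ (by positivity)]
      field_simp
      nlinarith [sq_nonneg s, pow_pos hs 4]

theorem inv_exp_sub_one_le_two_mul_exp_neg {s : ℝ} (hs : 1 ≤ s) :
    (exp s - 1)⁻¹ ≤ 2 * exp (-s) := by
  have htwo : 2 ≤ exp s := by linarith [add_one_le_exp s]
  rw [exp_neg, inv_le_iff_one_le_mul₀ (by linarith)]
  field_simp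
  linarith

theorem inv_sub_one_le_inv_exp_sub_one {t : ℝ} (ht : 0 < t) :
    t⁻¹ - 1 ≤ (exp t - 1)⁻¹ := by
  have htangent : 1 - t ≤ exp (-t) := by linarith [add_one_le_exp (-t)]
  have hmul : exp t - 1 ≤ t * exp t := by
    have := mul_le_mul_of_nonneg_right htangent (exp_pos t).le
    rw [← exp_add, neg_add_cancel, exp_zero] at this
    linarith
  calc t⁻¹ - 1 = (1 - t) / t := by field_simp
    _ ≤ exp (-t) / t := by gcongr
    _ = (t * exp t)⁻¹ := by rw [exp_neg]; field_simp
    _ ≤ (exp t - 1)⁻¹ := inv_anti₀ (by linarith [add_one_lt_exp ht.ne']) hmul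

end Real

/-- `∑ₖ eulerLogTerm t k = -log ∏ₙ (1 - e^{-nt})`, indexed from `k = 0`. -/
noncomputable def eulerLogTerm (t : ℝ) (k : ℕ) : ℝ :=
  ((k + 1) * (Real.exp ((k + 1) * t) - 1))⁻¹

section eulerLogTerm

open Finset

variable {t : ℝ}

theorem eulerLogTerm_le (ht : 0 < t) (k : ℕ) :
    eulerLogTerm t k ≤ t⁻¹ * ((k + 1 : ℕ) ^ 2 : ℝ)⁻¹ := by
  have hs : (k + 1) * t ≤ Real.exp ((k + 1) * t) - 1 := by
    linarith [Real.add_one_le_exp ((k + 1) * t)]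
  rw [eulerLogTerm, ← mul_inv]
  apply inv_anti₀ (by positivity)
  push_cast
  nlinarith [mul_le_mul_of_nonneg_left hs (by positivity : (0 : ℝ) ≤ k + 1)]

theorem eulerLogTerm_nonneg (ht : 0 < t) (k : ℕ) : 0 ≤ eulerLogTerm t k :=
  inv_nonneg.2 (mul_nonneg (by positivity) (sub_nonneg.2 (Real.one_le_exp (by positivity))))

theorem summable_eulerLogTerm (ht : 0 < t) : Summable (eulerLogTerm t) := by
  have hp : Summable fun k : ℕ ↦ ((k + 1 : ℕ) ^ 2 : ℝ)⁻¹ :=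
    (summable_nat_add_iff 1).2 (Real.summable_nat_pow_inv.2 one_lt_two)
  exact .of_nonneg_of_le (eulerLogTerm_nonneg ht) (eulerLogTerm_le ht) (hp.mul_left _)

theorem sum_range_inv_succ_sq_le (K : ℕ) :
    ∑ k ∈ range K, ((k + 1 : ℕ) ^ 2 : ℝ)⁻¹ ≤ π ^ 2 / 6 := by
  have := sum_le_hasSum (range (K + 1)) (fun n _ ↦ by positivity) hasSum_zeta_two
  simpa [sum_range_succ'] using this

theorem sum_range_eulerLogTerm_le (ht : 0 < t) {K : ℕ} (hK : K * t ≤ 1) :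
    ∑ k ∈ range K, eulerLogTerm t k ≤ π ^ 2 / (6 * t) - Real.log (K + 1) / 2 + 1 / 6 := by
  have hterm (k : ℕ) : eulerLogTerm t k ≤
      t⁻¹ * ((k + 1 : ℕ) ^ 2 : ℝ)⁻¹ - ((k + 1 : ℕ) : ℝ)⁻¹ / 2 + t / 6 := by
    have hk : (0 : ℝ) < k + 1 := by positivity
    calc eulerLogTerm t k = (k + 1 : ℝ)⁻¹ * (Real.exp ((k + 1) * t) - 1)⁻¹ := mul_inv _ _
      _ ≤ (k + 1 : ℝ)⁻¹ * (((k + 1) * t)⁻¹ - 1 / 2 + (k + 1) * t / 6) := by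
        gcongr; exact Real.inv_exp_sub_one_le (by positivity)
      _ = _ := by push_cast; field_simp
  have hharmonic : Real.log (K + 1) ≤ ∑ k ∈ range K, ((k + 1 : ℕ) : ℝ)⁻¹ := by
    simpa [harmonic] using log_add_one_le_harmonic K
  calc ∑ k ∈ range K, eulerLogTerm t k
      ≤ ∑ k ∈ range K,
          (t⁻¹ * ((k + 1 : ℕ) ^ 2 : ℝ)⁻¹ - ((k + 1 : ℕ) : ℝ)⁻¹ / 2 + t / 6) :=
        sum_le_sum fun k _ ↦ hterm k
    _ = t⁻¹ * ∑ k ∈ range K, ((k + 1 : ℕ) ^ 2 : ℝ)⁻¹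
          - (∑ k ∈ range K, ((k + 1 : ℕ) : ℝ)⁻¹) / 2 + K * t / 6 := by
      rw [sum_add_distrib, sum_sub_distrib, ← mul_sum, ← sum_div, sum_const, card_range,
        nsmul_eq_mul]
      ring
    _ ≤ t⁻¹ * (π ^ 2 / 6) - Real.log (K + 1) / 2 + 1 / 6 := by
      gcongr
      exact sum_range_inv_succ_sq_le K
    _ = _ := by field_simp

theorem eulerLogTerm_add_le (ht : 0 < t) {K : ℕ} (hK : 1 ≤ (K + 1) * t) (k : ℕ) :
    eulerLogTerm t (k + K) ≤ 2 * t * Real.exp (-t) ^ (k + 1) := by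
  have hs : 1 ≤ (k + K + 1) * t := by nlinarith [(k.cast_nonneg : (0 : ℝ) ≤ k)]
  calc eulerLogTerm t (k + K) = (k + K + 1 : ℝ)⁻¹ * (Real.exp ((k + K + 1) * t) - 1)⁻¹ := by
        rw [eulerLogTerm, mul_inv]; push_cast; ring_nf
    _ ≤ t * (2 * Real.exp (-((k + 1) * t))) := by
      have hinv : (k + K + 1 : ℝ)⁻¹ ≤ t := by
        rw [inv_le_iff_one_le_mul₀ (by positivity)]; linarith
      have hexp : (Real.exp ((k + K + 1) * t) - 1)⁻¹ ≤ 2 * Real.exp (-((k + 1) * t)) := by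
        refine (Real.inv_exp_sub_one_le_two_mul_exp_neg hs).trans ?_
        gcongr
        linarith [(K.cast_nonneg : (0 : ℝ) ≤ K)]
      exact mul_le_mul hinv hexp
        (inv_nonneg.2 (sub_nonneg.2 (Real.one_le_exp (by positivity)))) ht.le
    _ = 2 * t * Real.exp (-t) ^ (k + 1) := by rw [← Real.exp_nat_mul]; push_cast; ring_nf

theorem tsum_eulerLogTerm_add_le (ht : 0 < t) {K : ℕ} (hK : 1 ≤ (K + 1) * t) :
    ∑' k, eulerLogTerm t (k + K) ≤ 2 := by
  have hr0 : 0 ≤ Real.exp (-t) := (Real.exp_pos _).le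
  have hr1 : Real.exp (-t) < 1 := Real.exp_lt_one_iff.2 (by linarith)
  have hgeom : HasSum (fun k : ℕ ↦ 2 * t * Real.exp (-t) ^ (k + 1))
      (2 * t * (Real.exp (-t) * (1 - Real.exp (-t))⁻¹)) := by
    simpa only [pow_succ'] using ((hasSum_geometric_of_lt_one hr0 hr1).mul_left _).mul_left _
  refine (Summable.tsum_le_tsum (eulerLogTerm_add_le ht hK) ((summable_nat_add_iff K).2
    (summable_eulerLogTerm ht)) hgeom.summable).trans ?_
  rw [hgeom.tsum_eq]
  have htangent : t * Real.exp (-t) ≤ 1 - Real.exp (-t) := by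
    have := Real.add_one_le_exp t
    rw [Real.exp_neg]; field_simp; linarith
  rw [← div_eq_mul_inv, mul_div_assoc', div_le_iff₀ (by linarith)]
  linarith

theorem tsum_eulerLogTerm_le (ht : 0 < t) :
    ∑' k, eulerLogTerm t k ≤ π ^ 2 / (6 * t) + Real.log t / 2 + 3 := by
  set K := ⌊t⁻¹⌋₊
  have hK : t⁻¹ < K + 1 := Nat.lt_floor_add_one t⁻¹
  have hK1 : K * t ≤ 1 := calc
    K * t ≤ t⁻¹ * t := by gcongr; exact Nat.floor_le (inv_nonneg.2 ht.le)
    _ = 1 := inv_mul_cancel₀ ht.ne'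
  have hK2 : 1 ≤ (K + 1) * t := calc
    1 = t⁻¹ * t := (inv_mul_cancel₀ ht.ne').symm
    _ ≤ (K + 1) * t := by gcongr
  have hlog : -Real.log t ≤ Real.log (K + 1) := by
    rw [← Real.log_inv]; exact Real.log_le_log (inv_pos.2 ht) hK.le
  rw [← (summable_eulerLogTerm ht).sum_add_tsum_nat_add K]
  linarith [sum_range_eulerLogTerm_le ht hK1, tsum_eulerLogTerm_add_le ht hK2]

end eulerLogTerm

section LambertSeries

variable {q : ℂ}

theorem norm_pow_succ_lt_one (hq : ‖q‖ < 1) (n : ℕ) : ‖q ^ (n + 1)‖ < 1 := by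
  rw [norm_pow]; exact pow_lt_one₀ (norm_nonneg q) hq n.succ_ne_zero

theorem hasSum_pow_succ_div_one_sub {w : ℂ} (hw : ‖w‖ < 1) :
    HasSum (fun n : ℕ ↦ w ^ (n + 1)) (w / (1 - w)) := by
  simpa only [pow_succ', div_eq_mul_inv] using (hasSum_geometric_of_norm_lt_one hw).mul_left w

theorem tsum_neg_log_one_sub_pow (hq : ‖q‖ < 1) :
    ∑' n : ℕ, -log (1 - q ^ (n + 1)) = ∑' k : ℕ, q ^ (k + 1) / ((k + 1) * (1 - q ^ (k + 1))) := by
  set f : ℕ → ℕ → ℂ := fun n k ↦ (q ^ (n + 1)) ^ (k + 1) / (k + 1)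
  have hf : Summable (Function.uncurry f) := by
    refine .of_norm_bounded ((summable_geometric_of_lt_one (norm_nonneg q) hq).mul_of_nonneg
      (summable_geometric_of_lt_one (norm_nonneg q) hq) (fun _ ↦ by positivity)
      (fun _ ↦ by positivity)) fun ⟨n, k⟩ ↦ ?_
    have hk : (1 : ℝ) ≤ ‖(k + 1 : ℂ)‖ := by norm_cast; simp
    calc ‖f n k‖ ≤ ‖q‖ ^ ((n + 1) * (k + 1)) := by
          rw [norm_div, norm_pow, norm_pow, ← pow_mul]
          exact div_le_self (by positivity) hk
      _ ≤ ‖q‖ ^ n * ‖q‖ ^ k := by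
          rw [← pow_add]; exact pow_le_pow_of_le_one (norm_nonneg q) hq.le (by nlinarith)
  have hrow (n : ℕ) : ∑' k, f n k = -log (1 - q ^ (n + 1)) :=
    (hasSum_taylorSeries_neg_log' (norm_pow_succ_lt_one hq n)).tsum_eq
  have hcol (k : ℕ) : ∑' n, f n k = q ^ (k + 1) / ((k + 1) * (1 - q ^ (k + 1))) := by
    rw [mul_comm, ← div_div, ← ((hasSum_pow_succ_div_one_sub (norm_pow_succ_lt_one hq k)).div_const _).tsum_eq]
    simp only [f, ← pow_mul, mul_comm]
  simp_rw [← hrow, ← hcol]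
  exact hf.tsum_comm.symm

theorem norm_inv_tprod_one_sub_pow (hq : ‖q‖ < 1) :
    ‖(∏' n : ℕ, (1 - q ^ (n + 1)))⁻¹‖ =
      Real.exp (∑' k : ℕ, q ^ (k + 1) / ((k + 1) * (1 - q ^ (k + 1)))).re := by
  have hne (n : ℕ) : 1 - q ^ (n + 1) ≠ 0 :=
    sub_ne_zero.2 fun h ↦ (norm_pow_succ_lt_one hq n).ne (by rw [← h, norm_one])
  have hlog : Summable fun n : ℕ ↦ log (1 - q ^ (n + 1)) := by
    simpa only [sub_eq_add_neg, pow_succ'] using summable_log_one_add_of_summable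
      ((summable_geometric_of_norm_lt_one hq).mul_left q).neg
  rw [← tsum_neg_log_one_sub_pow hq, ← cexp_tsum_eq_tprod hne hlog, ← Complex.exp_neg,
    Complex.norm_exp, tsum_neg]

theorem norm_div_one_sub_le {w : ℂ} (hw : ‖w‖ < 1) : ‖w / (1 - w)‖ ≤ ‖w‖ / (1 - ‖w‖) := by
  rw [norm_div]
  gcongr
  simpa using norm_sub_norm_le (1 : ℂ) w

theorem norm_div_mul_one_sub_pow_le {t : ℝ} (ht : 0 < t) (hq : ‖q‖ = Real.exp (-t)) (k : ℕ) :
    ‖q ^ (k + 1) / ((k + 1) * (1 - q ^ (k + 1)))‖ ≤ eulerLogTerm t k := by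
  have hpow : ‖q ^ (k + 1)‖ = Real.exp (-((k + 1) * t)) := by
    rw [norm_pow, hq, ← Real.exp_nat_mul]; push_cast; ring_nf
  have hq₁ : ‖q‖ < 1 := by rw [hq, Real.exp_lt_one_iff]; linarith
  have hk : ‖(k + 1 : ℂ)‖ = k + 1 := by norm_cast
  calc ‖q ^ (k + 1) / ((k + 1) * (1 - q ^ (k + 1)))‖
      = ‖q ^ (k + 1) / (1 - q ^ (k + 1))‖ / (k + 1) := by rw [mul_comm, ← div_div, norm_div, hk]
    _ ≤ Real.exp (-((k + 1) * t)) / (1 - Real.exp (-((k + 1) * t))) / (k + 1) := by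
      rw [← hpow]; gcongr; exact norm_div_one_sub_le (norm_pow_succ_lt_one hq₁ k)
    _ = eulerLogTerm t k := by
      rw [eulerLogTerm, Real.exp_neg]
      field_simp

end LambertSeries

theorem inv_norm_one_sub_exp_le {z : ℂ} (hz₀ : z ≠ 0) (hz : ‖z‖ ≤ 1 / 2) :
    ‖1 - exp z‖⁻¹ ≤ ‖z‖⁻¹ + 2 := by
  have hpos : 0 < ‖z‖ := norm_pos_iff.2 hz₀
  have hlow : ‖z‖ - ‖z‖ ^ 2 ≤ ‖1 - exp z‖ := by
    have h₁ := norm_exp_sub_one_sub_id_le (hz.trans (by norm_num))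
    have h₂ := norm_sub_le (exp z - 1) (exp z - 1 - z)
    rw [sub_sub_cancel, norm_sub_rev] at h₂
    linarith
  calc ‖1 - exp z‖⁻¹ ≤ (‖z‖ - ‖z‖ ^ 2)⁻¹ := inv_anti₀ (by nlinarith) hlow
    _ ≤ ‖z‖⁻¹ + 2 := by
      rw [inv_le_iff_one_le_mul₀ (by nlinarith)]
      field_simp
      nlinarith

theorem two_mul_abs_sin_sub_le_norm_one_sub_exp (z : ℂ) :
    2 * |Real.sin (z.im / 2)| - |1 - Real.exp z.re| ≤ ‖1 - exp z‖ := by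
  have hsplit : exp z = Real.exp z.re * exp (I * z.im) := by
    rw [ofReal_exp, ← Complex.exp_add]; congr 1; rw [mul_comm]; exact (re_add_im z).symm
  have hcircle : ‖1 - exp (I * z.im)‖ = 2 * |Real.sin (z.im / 2)| := by
    rw [norm_sub_rev, norm_exp_I_mul_ofReal_sub_one, norm_mul, Real.norm_eq_abs, Real.norm_eq_abs,
      abs_two]
  have hradial : ‖exp (I * z.im) - exp z‖ = |1 - Real.exp z.re| := by
    rw [hsplit, ← one_sub_mul, norm_mul, mul_comm I, norm_exp_ofReal_mul_I, mul_one,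
      ← ofReal_one, ← ofReal_sub, norm_real, Real.norm_eq_abs]
  rw [← hcircle, ← hradial]
  simpa using norm_sub_le (1 - exp z) (exp (I * z.im) - exp z)

theorem inv_norm_one_sub_exp_two_pi_I_le {M u v : ℝ} (hM : 0 ≤ M) (hv : 0 < v)
    (hv' : v < 1 / 100) (hMu : M * v ≤ |u|) (hu : |u| ≤ 1 / 2) :
    ‖1 - exp (2 * π * I * (u + v * I))‖⁻¹ ≤ (2 * π * v * √(1 + M ^ 2))⁻¹ + 8 := by
  have hπ := pi_lt_d2
  set z := 2 * π * I * (u + v * I)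
  have hre : z.re = -(2 * π * v) := by simp [z]
  have him : z.im = 2 * π * u := by simp [z]
  rcases le_or_gt |u| (1 / 16) with hsmall | hlarge
  · have hlow : 2 * π * v * √(1 + M ^ 2) ≤ ‖z‖ := by
      rw [← re_add_im z, hre, him, norm_add_mul_I,
        show 2 * π * v * √(1 + M ^ 2) = √((2 * π * v) ^ 2 * (1 + M ^ 2)) by
          rw [sqrt_mul (by positivity), sqrt_sq (by positivity)]]
      apply sqrt_le_sqrt
      have : (M * v) ^ 2 ≤ u ^ 2 := by
        rw [← sq_abs u]; exact pow_le_pow_left₀ (by positivity) hMu 2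
      nlinarith [mul_le_mul_of_nonneg_left this (sq_nonneg (2 * π))]
    have hup : ‖z‖ ≤ 1 / 2 := by
      refine (norm_le_abs_re_add_abs_im z).trans ?_
      rw [hre, him, abs_neg, abs_of_pos (by positivity : 0 < 2 * π * v), abs_mul,
        abs_of_pos (by positivity : (0 : ℝ) < 2 * π)]
      nlinarith [pi_pos]
    have hz₀ : z ≠ 0 := norm_pos_iff.1 (lt_of_lt_of_le (by positivity) hlow)
    calc ‖1 - exp z‖⁻¹ ≤ ‖z‖⁻¹ + 2 := inv_norm_one_sub_exp_le hz₀ hup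
      _ ≤ (2 * π * v * √(1 + M ^ 2))⁻¹ + 8 := by
        gcongr
        norm_num
  · have hsin : 2 * |u| ≤ |Real.sin (z.im / 2)| := by
      have := mul_abs_le_abs_sin (x := π * u)
        (by rw [abs_mul, abs_of_pos pi_pos]; nlinarith [pi_pos])
      rw [him, show 2 * π * u / 2 = π * u by ring]
      rwa [abs_mul, abs_of_pos pi_pos, ← mul_assoc, div_mul_cancel₀ _ pi_ne_zero] at this
    have hrad : |1 - Real.exp z.re| ≤ 2 * π * v := by
      have : 0 < 2 * π * v := by positivity
      rw [hre, abs_of_nonneg (by linarith [exp_le_one_iff.2 (by linarith : -(2 * π * v) ≤ 0)])]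
      linarith [add_one_le_exp (-(2 * π * v))]
    have hfar : 1 / 8 ≤ ‖1 - exp z‖ := by
      have : π * v < 3.15 / 100 := by nlinarith [pi_pos]
      linarith [two_mul_abs_sin_sub_le_norm_one_sub_exp z]
    calc ‖1 - exp z‖⁻¹ ≤ 8 := by rw [inv_le_comm₀ (by linarith) (by norm_num)]; linarith
      _ ≤ (2 * π * v * √(1 + M ^ 2))⁻¹ + 8 := le_add_of_nonneg_left (by positivity)

theorem re_tsum_le_norm_add_tsum_sub {a : ℕ → ℂ} {f : ℕ → ℝ} (hf : Summable f)
    (h : ∀ k, ‖a k‖ ≤ f k) : (∑' k, a k).re ≤ ‖a 0‖ + (∑' k, f k - f 0) := by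
  have ha : Summable fun k ↦ ‖a k‖ := .of_nonneg_of_le (fun _ ↦ norm_nonneg _) h hf
  rw [ha.of_norm.tsum_eq_zero_add, hf.tsum_eq_zero_add, add_re, add_sub_cancel_left]
  gcongr
  · exact re_le_norm _
  · calc (∑' k, a (k + 1)).re ≤ ‖∑' k, a (k + 1)‖ := re_le_norm _
      _ ≤ ∑' k, ‖a (k + 1)‖ := norm_tsum_le_tsum_norm ((summable_nat_add_iff 1).2 ha)
      _ ≤ ∑' k, f (k + 1) :=
        Summable.tsum_le_tsum (fun k ↦ h _) ((summable_nat_add_iff 1).2 ha)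
          ((summable_nat_add_iff 1).2 hf)

/-- Minor arc bound: for fixed `M > 0`, `τ = u + iv` with `Mv ≤ |u| ≤ 1/2` and `v → 0⁺`,
the partition generating function `P(q) = ∏_{n≥1}(1-qⁿ)⁻¹` at `q = e^{2πiτ}` satisfies
`|P(q)| ≪ √v · exp((1/v)(π/12 - (1/(2π))(1 - 1/√(1+M²))))`. -/
theorem minor_arc_bound (M : ℝ) (hM : 0 < M) :
    ∃ C > 0, ∃ δ > 0, ∀ u v : ℝ, 0 < v → v < δ → M * v ≤ |u| → |u| ≤ 1 / 2 →
      ‖(∏' n : ℕ, (1 - Complex.exp (2 * Real.pi * Complex.I * (u + v * Complex.I)) ^ (n + 1)))⁻¹‖ ≤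
        C * Real.sqrt v *
          Real.exp ((1 / v) * (Real.pi / 12 -
            (1 / (2 * Real.pi)) * (1 - 1 / Real.sqrt (1 + M ^ 2)))) := by
  refine ⟨Real.exp 12 * √(2 * π), by positivity, 1 / 100, by norm_num,
    fun u v hv hvδ hMu hu ↦ ?_⟩
  set q := Complex.exp (2 * π * I * (u + v * I))
  set t := 2 * π * v
  set A := (1 / v) * (π / 12 - (1 / (2 * π)) * (1 - 1 / √(1 + M ^ 2)))
  have ht : 0 < t := by positivity
  have hq : ‖q‖ = Real.exp (-t) := by simp [q, t, Complex.norm_exp]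
  have hq1 : ‖q‖ < 1 := by rw [hq, Real.exp_lt_one_iff]; linarith
  have hfirst : ‖q / (1 - q)‖ ≤ (t * √(1 + M ^ 2))⁻¹ + 8 := by
    calc ‖q / (1 - q)‖ = ‖q‖ * ‖1 - q‖⁻¹ := by rw [norm_div, div_eq_mul_inv]
      _ ≤ ‖1 - q‖⁻¹ := mul_le_of_le_one_left (by positivity) hq1.le
      _ ≤ (t * √(1 + M ^ 2))⁻¹ + 8 := inv_norm_one_sub_exp_two_pi_I_le hM.le hv hvδ hMu hu
  have hexponent : (∑' k : ℕ, q ^ (k + 1) / ((k + 1) * (1 - q ^ (k + 1)))).re ≤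
      A + Real.log t / 2 + 12 := calc
    _ ≤ _ := re_tsum_le_norm_add_tsum_sub (summable_eulerLogTerm ht)
      (norm_div_mul_one_sub_pow_le ht hq)
    _ ≤ ((t * √(1 + M ^ 2))⁻¹ + 8)
          + (π ^ 2 / (6 * t) + Real.log t / 2 + 3 - (t⁻¹ - 1)) := by
      gcongr
      · simpa using hfirst
      · exact tsum_eulerLogTerm_le ht
      · exact (Real.inv_sub_one_le_inv_exp_sub_one ht).trans_eq (by simp [eulerLogTerm])
    _ = A + Real.log t / 2 + 12 := by simp only [A, t]; field_simp; ring
  have hsqrt : √(2 * π) * √v = Real.exp (Real.log t / 2) := by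
    rw [← Real.sqrt_mul (by positivity), Real.sqrt_eq_rpow, Real.rpow_def_of_pos ht]; ring_nf
  rw [norm_inv_tprod_one_sub_pow hq1]
  calc Real.exp _ ≤ Real.exp (A + Real.log t / 2 + 12) := Real.exp_le_exp.2 hexponent
    _ = Real.exp 12 * √(2 * π) * √v * Real.exp A := by
      rw [mul_assoc _ (√(2 * π)), hsqrt, ← Real.exp_add, ← Real.exp_add]; ring_nf
end
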